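/- arXiv:0806.0934 — 3 statements merged into one kernel-verified Lean document; each statement's English description precedes it below -/
import Mathlib

section
/- The Fourier cosine integral (3/(4\pi)) \int_0^{\infty} (\sin^4(\lambda t/4) / (\lambda^3 (t/4)^4)) \cos(\nu t) \, dt equals 1 - 6(\nu/\lambda)^2 + 6(|\nu|/\lambda)^3 for |\nu| \le \lambda/2, equals 2(1 - |\nu|/\lambda)^3 for \lambda/2 \le |\nu| \le \lambda, and equals 0 for |\nu| \ge \lambda. -/
/-!
Since `1 / t⁴ = (1 / 6) ∫₀^∞ x³ e^{-tx} dx`, Fubini turns the integral into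
`(1 / 6) ∫₀^∞ x³ L(x) dx`, where `L` is the Laplace transform of
`sin⁴(λt/4) cos(νt) = ∑ aᵢ cos(cᵢ t)`. Thus `L(x) = ∑ aᵢ x / (x² + cᵢ²)`, and because
`∑ aᵢ = ∑ aᵢ cᵢ² = 0` the polynomial parts of `x³ L(x)` cancel, leaving
`∑ aᵢ cᵢ⁴ / (x² + cᵢ²)`, whose integral is `(π / 2) ∑ aᵢ |cᵢ|³`. Resolving the absolute values
on each range of `|ν|` gives the spline.
-/

open Real MeasureTheory Set
open scoped Nat

lemma integral_pow_mul_exp_neg_mul_Ioi (n : ℕ) {r : ℝ} (hr : 0 < r) :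
    ∫ x in Ioi (0 : ℝ), x ^ n * exp (-(r * x)) = n ! / r ^ (n + 1) := by
  have h := integral_rpow_mul_exp_neg_mul_Ioi (a := n + 1) (by positivity) hr
  rw [add_sub_cancel_right, Gamma_nat_eq_factorial, ← Nat.cast_succ, rpow_natCast,
    one_div_pow, one_div_mul_eq_div] at h
  rw [← h]
  refine setIntegral_congr_fun measurableSet_Ioi fun x _ => ?_
  simp [rpow_natCast]

lemma integrableOn_pow_mul_exp_neg_mul_Ioi (n : ℕ) {r : ℝ} (hr : 0 < r) :
    IntegrableOn (fun x : ℝ => x ^ n * exp (-(r * x))) (Ioi 0) := by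
  refine (integrableOn_rpow_mul_exp_neg_mul_rpow (s := n)
    (neg_one_lt_zero.trans_le n.cast_nonneg) one_pos hr).congr_fun
    (fun x _ => ?_) measurableSet_Ioi
  simp [rpow_natCast]

lemma integrable_mul_pow_mul_exp_neg_mul_prod (n : ℕ) {f : ℝ → ℝ}
    (hf : IntegrableOn (fun t => f t / t ^ (n + 1)) (Ioi 0)) :
    Integrable (fun p : ℝ × ℝ => f p.1 * (p.2 ^ n * exp (-(p.1 * p.2))))
      ((volume.restrict (Ioi 0)).prod (volume.restrict (Ioi 0))) := by
  have hf_meas : AEStronglyMeasurable f (volume.restrict (Ioi 0)) := by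
    refine (hf.aestronglyMeasurable.mul (continuous_pow (n + 1)).aestronglyMeasurable).congr ?_
    filter_upwards [ae_restrict_mem measurableSet_Ioi] with t ht
    exact div_mul_cancel₀ _ (pow_ne_zero _ (ne_of_gt ht))
  have h_meas : AEStronglyMeasurable (fun p : ℝ × ℝ => f p.1 * (p.2 ^ n * exp (-(p.1 * p.2))))
      ((volume.restrict (Ioi 0)).prod (volume.restrict (Ioi 0))) :=
    hf_meas.comp_fst.mul (by fun_prop : Continuous fun p : ℝ × ℝ =>
      p.2 ^ n * exp (-(p.1 * p.2))).aestronglyMeasurable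
  rw [integrable_prod_iff h_meas]
  constructor
  · filter_upwards [ae_restrict_mem measurableSet_Ioi] with t ht
    exact (integrableOn_pow_mul_exp_neg_mul_Ioi n ht).const_mul _
  · refine (hf.norm.const_mul (n ! : ℝ)).congr ?_
    filter_upwards [ae_restrict_mem measurableSet_Ioi] with t (ht : 0 < t)
    calc (n ! : ℝ) * ‖f t / t ^ (n + 1)‖
        = ‖f t‖ * ∫ x in Ioi (0 : ℝ), x ^ n * exp (-(t * x)) := by
          rw [integral_pow_mul_exp_neg_mul_Ioi n ht, norm_div,
            norm_of_nonneg (by positivity : (0 : ℝ) ≤ t ^ (n + 1))]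
          field_simp
      _ = ∫ x in Ioi (0 : ℝ), ‖f t * (x ^ n * exp (-(t * x)))‖ := by
          rw [← integral_const_mul]
          refine setIntegral_congr_fun measurableSet_Ioi fun x (hx : 0 < x) => ?_
          rw [norm_mul, norm_of_nonneg (by positivity : 0 ≤ x ^ n * exp (-(t * x)))]

theorem integral_div_pow_succ_eq_integral_laplace (n : ℕ) {f : ℝ → ℝ}
    (hf : IntegrableOn (fun t => f t / t ^ (n + 1)) (Ioi 0)) :
    ∫ t in Ioi (0 : ℝ), f t / t ^ (n + 1) =
      (n ! : ℝ)⁻¹ * ∫ x in Ioi (0 : ℝ), x ^ n * ∫ t in Ioi (0 : ℝ), exp (-(x * t)) * f t := by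
  have h_gamma : ∀ t ∈ Ioi (0 : ℝ), f t / t ^ (n + 1) =
      (n ! : ℝ)⁻¹ * ∫ x in Ioi (0 : ℝ), f t * (x ^ n * exp (-(t * x))) := by
    intro t ht
    rw [integral_const_mul, integral_pow_mul_exp_neg_mul_Ioi n ht]
    field_simp
  rw [setIntegral_congr_fun measurableSet_Ioi h_gamma, integral_const_mul,
    integral_integral_swap (integrable_mul_pow_mul_exp_neg_mul_prod n hf)]
  congr 1
  refine setIntegral_congr_fun measurableSet_Ioi fun x _ => ?_
  rw [← integral_const_mul]
  congr 1 with t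
  rw [mul_comm t x]
  ring

lemma integral_exp_neg_mul_mul_cos {x : ℝ} (hx : 0 < x) (c : ℝ) :
    ∫ t in Ioi (0 : ℝ), exp (-(x * t)) * cos (c * t) = x / (x ^ 2 + c ^ 2) := by
  have ha : (-x + c * Complex.I).re < 0 := by simpa using hx
  have h_re : ∀ t : ℝ, exp (-(x * t)) * cos (c * t) =
      Complex.reCLM (Complex.exp ((-x + c * Complex.I) * t)) := by
    simp [Complex.exp_re]
  simp_rw [h_re]
  rw [Complex.reCLM.integral_comp_comm (integrableOn_exp_mul_complex_Ioi ha 0),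
    integral_exp_mul_complex_Ioi ha]
  simp [Complex.div_re, Complex.normSq, sq]

lemma integrableOn_exp_neg_mul_mul_cos {x : ℝ} (hx : 0 < x) (c : ℝ) :
    IntegrableOn (fun t => exp (-(x * t)) * cos (c * t)) (Ioi 0) := by
  refine (exp_neg_integrableOn_Ioi 0 hx).mono' (by fun_prop) ?_
  filter_upwards with t
  rw [norm_mul, norm_of_nonneg (exp_pos _).le, neg_mul]
  exact mul_le_of_le_one_right (exp_pos _).le (abs_cos_le_one _)

lemma pow_four_div_sq_add_sq_eq {c : ℝ} (hc : c ≠ 0) (x : ℝ) :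
    c ^ 4 / (x ^ 2 + c ^ 2) = c ^ 2 * (1 + (|c|⁻¹ * x) ^ 2)⁻¹ := by
  rw [mul_pow, inv_pow, sq_abs]
  field_simp
  ring

lemma integral_pow_four_div_sq_add_sq (c : ℝ) :
    ∫ x in Ioi (0 : ℝ), c ^ 4 / (x ^ 2 + c ^ 2) = π / 2 * |c| ^ 3 := by
  rcases eq_or_ne c 0 with rfl | hc
  · simp
  simp_rw [pow_four_div_sq_add_sq_eq hc]
  rw [integral_const_mul, integral_comp_mul_left_Ioi (fun x => (1 + x ^ 2)⁻¹) 0 (by positivity)]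
  simp only [inv_inv, mul_zero, integral_Ioi_inv_one_add_sq, arctan_zero, sub_zero, smul_eq_mul]
  rw [← sq_abs c]
  ring

lemma integrableOn_pow_four_div_sq_add_sq (c : ℝ) :
    IntegrableOn (fun x : ℝ => c ^ 4 / (x ^ 2 + c ^ 2)) (Ioi 0) := by
  rcases eq_or_ne c 0 with rfl | hc
  · simp
  simp_rw [pow_four_div_sq_add_sq_eq hc]
  exact ((integrable_inv_one_add_sq.comp_mul_left' (by positivity)).const_mul _).integrableOn

lemma pow_three_mul_div_sq_add_sq {x : ℝ} (hx : x ≠ 0) (c : ℝ) :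
    x ^ 3 * (x / (x ^ 2 + c ^ 2)) = x ^ 2 - c ^ 2 + c ^ 4 / (x ^ 2 + c ^ 2) := by
  have : x ^ 2 + c ^ 2 ≠ 0 := by positivity
  field_simp
  ring

theorem integral_sum_cos_div_pow_four {ι : Type*} (s : Finset ι) (a c : ι → ℝ)
    (h₀ : ∑ i ∈ s, a i = 0) (h₂ : ∑ i ∈ s, a i * c i ^ 2 = 0)
    (hint : IntegrableOn (fun t => (∑ i ∈ s, a i * cos (c i * t)) / t ^ 4) (Ioi 0)) :
    ∫ t in Ioi (0 : ℝ), (∑ i ∈ s, a i * cos (c i * t)) / t ^ 4 =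
      π / 12 * ∑ i ∈ s, a i * |c i| ^ 3 := by
  have h_laplace : ∀ x ∈ Ioi (0 : ℝ), x ^ 3 * ∫ t in Ioi (0 : ℝ),
      exp (-(x * t)) * ∑ i ∈ s, a i * cos (c i * t) =
      ∑ i ∈ s, a i * (c i ^ 4 / (x ^ 2 + c i ^ 2)) := by
    intro x hx
    simp_rw [Finset.mul_sum, mul_left_comm (exp _)]
    rw [integral_finsetSum _ fun i _ => (integrableOn_exp_neg_mul_mul_cos hx (c i)).const_mul _]
    simp_rw [integral_const_mul, integral_exp_neg_mul_mul_cos hx, Finset.mul_sum,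
      mul_left_comm (x ^ 3), pow_three_mul_div_sq_add_sq (ne_of_gt hx), mul_add, mul_sub,
      Finset.sum_add_distrib, Finset.sum_sub_distrib, ← Finset.sum_mul, h₀, h₂, zero_mul,
      sub_self, zero_add]
  rw [integral_div_pow_succ_eq_integral_laplace 3 hint,
    setIntegral_congr_fun measurableSet_Ioi h_laplace,
    integral_finsetSum _ fun i _ => (integrableOn_pow_four_div_sq_add_sq (c i)).const_mul _]
  simp_rw [integral_const_mul, integral_pow_four_div_sq_add_sq, Finset.mul_sum]
  refine Finset.sum_congr rfl fun i _ => ?_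
  norm_num [Nat.factorial]
  ring

lemma sin_pow_four_mul_cos (lam nu t : ℝ) :
    sin (lam * t / 4) ^ 4 * cos (nu * t) =
      ∑ i : Fin 5, ![3 / 8, -1 / 4, -1 / 4, 1 / 16, 1 / 16] i *
        cos (![nu, lam / 2 + nu, lam / 2 - nu, lam + nu, lam - nu] i * t) := by
  have h_half : cos (lam / 2 * t) = 1 - 2 * sin (lam * t / 4) ^ 2 := by
    rw [show lam / 2 * t = 2 * (lam * t / 4) by ring, cos_two_mul, cos_sq']
    ring
  have h_full : cos (lam * t) = 2 * cos (lam / 2 * t) ^ 2 - 1 := by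
    rw [← cos_two_mul]
    ring_nf
  simp only [Fin.sum_univ_five, Matrix.cons_val]
  rw [add_mul, sub_mul, add_mul, sub_mul, cos_add, cos_sub, cos_add, cos_sub, h_full, h_half]
  ring

lemma integrableOn_sin_pow_four_mul_cos_div_pow_four (lam nu : ℝ) :
    IntegrableOn (fun t => sin (lam * t / 4) ^ 4 * cos (nu * t) / t ^ 4) (Ioi 0) := by
  have h_meas : AEStronglyMeasurable (fun t => sin (lam * t / 4) ^ 4 * cos (nu * t) / t ^ 4) :=
    (by fun_prop : Measurable _).aestronglyMeasurable
  have h_norm : ∀ t : ℝ, 0 < t →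
      ‖sin (lam * t / 4) ^ 4 * cos (nu * t) / t ^ 4‖ ≤ |sin (lam * t / 4)| ^ 4 / t ^ 4 := by
    intro t ht
    rw [norm_div, norm_mul, norm_pow, norm_pow, Real.norm_eq_abs, Real.norm_eq_abs,
      Real.norm_of_nonneg ht.le]
    gcongr
    exact mul_le_of_le_one_right (by positivity) (abs_cos_le_one _)
  rw [← Ioc_union_Ioi_eq_Ioi zero_le_one]
  refine IntegrableOn.union ?_ ?_
  · refine (integrableOn_const (C := (|lam| / 4) ^ 4) measure_Ioc_lt_top.ne).mono'
      h_meas.restrict ?_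
    filter_upwards [ae_restrict_mem measurableSet_Ioc] with t ht
    refine (h_norm t ht.1).trans ?_
    rw [div_le_iff₀ (pow_pos ht.1 4), ← mul_pow]
    gcongr
    calc |sin (lam * t / 4)| ≤ |lam * t / 4| := abs_sin_le_abs
      _ = |lam| / 4 * t := by rw [abs_div, abs_mul, abs_of_pos ht.1]; norm_num; ring
  · refine (integrableOn_Ioi_rpow_of_lt (by norm_num : (-4 : ℝ) < -1) one_pos).mono'
      h_meas.restrict ?_
    filter_upwards [ae_restrict_mem measurableSet_Ioi] with t ht
    have ht₀ : 0 < t := one_pos.trans ht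
    refine (h_norm t ht₀).trans ?_
    rw [rpow_neg ht₀.le, rpow_ofNat, ← one_div]
    gcongr
    exact pow_le_one₀ (abs_nonneg _) (abs_sin_le_one _)

theorem integral_sin_pow_four_mul_cos_div_pow_four (lam nu : ℝ) :
    ∫ t in Ioi (0 : ℝ), sin (lam * t / 4) ^ 4 * cos (nu * t) / t ^ 4 =
      π / 12 * (3 / 8 * |nu| ^ 3 - 1 / 4 * |lam / 2 + nu| ^ 3 - 1 / 4 * |lam / 2 - nu| ^ 3
        + 1 / 16 * |lam + nu| ^ 3 + 1 / 16 * |lam - nu| ^ 3) := by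
  have hint := integrableOn_sin_pow_four_mul_cos_div_pow_four lam nu
  simp_rw [sin_pow_four_mul_cos lam nu] at hint ⊢
  rw [integral_sum_cos_div_pow_four Finset.univ _ _ ?_ ?_ hint] <;>
    simp only [Fin.sum_univ_five, Matrix.cons_val] <;> ring

/-- The cubic spline `E^λ_J(ν)`, written as a combination of cubes `|·|³`. -/
noncomputable def jacksonSpline (lam nu : ℝ) : ℝ :=
  16 / lam ^ 3 * (3 / 8 * |nu| ^ 3 - 1 / 4 * |lam / 2 + nu| ^ 3 - 1 / 4 * |lam / 2 - nu| ^ 3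
    + 1 / 16 * |lam + nu| ^ 3 + 1 / 16 * |lam - nu| ^ 3)

theorem integral_jacksonKernel_mul_cos (lam nu : ℝ) :
    (3 / (4 * π)) * ∫ t in Ioi (0 : ℝ),
      sin (lam * t / 4) ^ 4 / (lam ^ 3 * (t / 4) ^ 4) * cos (nu * t) = jacksonSpline lam nu := by
  have h_kernel : ∀ t : ℝ, sin (lam * t / 4) ^ 4 / (lam ^ 3 * (t / 4) ^ 4) * cos (nu * t) =
      256 / lam ^ 3 * (sin (lam * t / 4) ^ 4 * cos (nu * t) / t ^ 4) := fun t => by ring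
  simp_rw [h_kernel]
  rw [integral_const_mul, integral_sin_pow_four_mul_cos_div_pow_four, jacksonSpline]
  field_simp
  ring

lemma jacksonSpline_abs (lam nu : ℝ) : jacksonSpline lam |nu| = jacksonSpline lam nu := by
  rcases abs_cases nu with ⟨h, -⟩ | ⟨h, -⟩ <;> rw [h]
  simp only [jacksonSpline, abs_neg, ← sub_eq_add_neg, sub_neg_eq_add]
  ring

section PiecewiseForm

variable {lam nu : ℝ}

lemma jacksonSpline_of_abs_le_half (hlam : 0 < lam) (h : |nu| ≤ lam / 2) :
    jacksonSpline lam nu = 1 - 6 * (nu / lam) ^ 2 + 6 * (|nu| / lam) ^ 3 := by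
  have := abs_nonneg nu
  rw [← jacksonSpline_abs, jacksonSpline, abs_abs,
    abs_of_nonneg (by linarith : 0 ≤ lam / 2 + |nu|),
    abs_of_nonneg (by linarith : 0 ≤ lam / 2 - |nu|),
    abs_of_nonneg (by linarith : 0 ≤ lam + |nu|), abs_of_nonneg (by linarith : 0 ≤ lam - |nu|),
    div_pow nu, ← sq_abs nu]
  field_simp
  ring

lemma jacksonSpline_of_half_le_abs_of_abs_le (hlam : 0 < lam) (h₁ : lam / 2 ≤ |nu|)
    (h₂ : |nu| ≤ lam) : jacksonSpline lam nu = 2 * (1 - |nu| / lam) ^ 3 := by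
  rw [← jacksonSpline_abs, jacksonSpline, abs_abs,
    abs_of_nonneg (by linarith : 0 ≤ lam / 2 + |nu|),
    abs_of_nonpos (by linarith : lam / 2 - |nu| ≤ 0),
    abs_of_nonneg (by linarith : 0 ≤ lam + |nu|), abs_of_nonneg (by linarith : 0 ≤ lam - |nu|)]
  field_simp
  ring

lemma jacksonSpline_of_le_abs (hlam : 0 < lam) (h : lam ≤ |nu|) : jacksonSpline lam nu = 0 := by
  rw [← jacksonSpline_abs, jacksonSpline, abs_abs,
    abs_of_nonneg (by linarith : 0 ≤ lam / 2 + |nu|),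
    abs_of_nonpos (by linarith : lam / 2 - |nu| ≤ 0),
    abs_of_nonneg (by linarith : 0 ≤ lam + |nu|), abs_of_nonpos (by linarith : lam - |nu| ≤ 0)]
  field_simp
  ring

end PiecewiseForm

/-- The Fourier cosine transform of the Jackson kernel is the cubic spline
`E^λ_J`: `(3/(4π)) ∫_0^∞ sin⁴(λt/4)/(λ³(t/4)⁴) cos(νt) dt` equals
`1 - 6(ν/λ)² + 6(|ν|/λ)³` for `|ν| ≤ λ/2`, equals `2(1 - |ν|/λ)³` for
`λ/2 ≤ |ν| ≤ λ`, and equals `0` for `|ν| ≥ λ`. -/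
theorem jackson_cosine_transform (lam : ℝ) (hlam : 0 < lam) (nu : ℝ) :
    (|nu| ≤ lam / 2 →
      (3 / (4 * Real.pi)) * ∫ t in Set.Ioi (0 : ℝ),
        (Real.sin (lam * t / 4)) ^ 4 / (lam ^ 3 * (t / 4) ^ 4) * Real.cos (nu * t)
        = 1 - 6 * (nu / lam) ^ 2 + 6 * (|nu| / lam) ^ 3) ∧
    (lam / 2 ≤ |nu| → |nu| ≤ lam →
      (3 / (4 * Real.pi)) * ∫ t in Set.Ioi (0 : ℝ),
        (Real.sin (lam * t / 4)) ^ 4 / (lam ^ 3 * (t / 4) ^ 4) * Real.cos (nu * t)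
        = 2 * (1 - |nu| / lam) ^ 3) ∧
    (lam ≤ |nu| →
      (3 / (4 * Real.pi)) * ∫ t in Set.Ioi (0 : ℝ),
        (Real.sin (lam * t / 4)) ^ 4 / (lam ^ 3 * (t / 4) ^ 4) * Real.cos (nu * t)
        = 0) := by
  rw [integral_jacksonKernel_mul_cos]
  exact ⟨jacksonSpline_of_abs_le_half hlam, jacksonSpline_of_half_le_abs_of_abs_le hlam,
    jacksonSpline_of_le_abs hlam⟩
end

section
/- Let a, b, c be real constants with a+c > 1, b+c > 1, and a+b+c > 2. Then \phi(y,v) = (|y|+1)^{-a} (|v|+1)^{-b} (|y+v|+1)^{-c} is integrable over the first quadrant \{y > 0, v > 0\}; in particular the condition a+b > 1 may be dropped for integrability over \mathbb{R}_+^2. -/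
/-!
Split `c = c₁ + c₂` with `a + c₁ > 1` and `b + c₂ > 1` (possible exactly because `a + b + c > 2`).
On the quadrant, `(y + v + 1) ^ (-t) ≤ (y + 1) ^ (-t)` when `t ≥ 0`, while for `t < 0` one has
`(y + v + 1) ^ (-t) ≤ ((y + 1) (v + 1)) ^ (-t)`. Applying this to `c₁` and to `c₂` dominates `φ` by
the product `(y + 1) ^ (-p) (v + 1) ^ (-q)`, where a negative `c₂` lowers `p` to `a + c > 1` and a
negative `c₁` lowers `q` to `b + c > 1`.
-/

open MeasureTheory Set Real

theorem MeasureTheory.IntegrableOn.mul_prod {α β L : Type*} [MeasurableSpace α]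
    [MeasurableSpace β] [NormedRing L] {μ : Measure α} {ν : Measure β} [SFinite μ] [SFinite ν]
    {f : α → L} {g : β → L} {s : Set α} {t : Set β}
    (hf : IntegrableOn f s μ) (hg : IntegrableOn g t ν) :
    IntegrableOn (fun z : α × β => f z.1 * g z.2) (s ×ˢ t) (μ.prod ν) := by
  rw [IntegrableOn, ← Measure.prod_restrict]
  exact Integrable.mul_prod hf hg

lemma add_add_one_rpow_neg_le (t : ℝ) {y v : ℝ} (hy : 0 ≤ y) (hv : 0 ≤ v) :
    (y + v + 1) ^ (-t) ≤ (y + 1) ^ (-t) * (v + 1) ^ (-min t 0) := by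
  rcases le_or_gt 0 t with ht | ht
  · rw [min_eq_right ht, neg_zero, rpow_zero, mul_one]
    exact rpow_le_rpow_of_nonpos (by linarith) (by linarith) (by linarith)
  · rw [min_eq_left ht.le, ← mul_rpow (by linarith) (by linarith)]
    exact rpow_le_rpow (by linarith) (by nlinarith) (by linarith)

lemma rpow_neg_mul_rpow_neg_mul_rpow_neg_le {a b c₁ c₂ y v : ℝ} (hy : 0 ≤ y) (hv : 0 ≤ v) :
    (y + 1) ^ (-a) * (v + 1) ^ (-b) * (y + v + 1) ^ (-(c₁ + c₂)) ≤
      (y + 1) ^ (-(a + c₁ + min c₂ 0)) * (v + 1) ^ (-(b + c₂ + min c₁ 0)) := by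
  have hy₁ : 0 < y + 1 := by linarith
  have hv₁ : 0 < v + 1 := by linarith
  have h₁ := add_add_one_rpow_neg_le c₁ hy hv
  have h₂ : (y + v + 1) ^ (-c₂) ≤ (v + 1) ^ (-c₂) * (y + 1) ^ (-min c₂ 0) := by
    simpa only [add_comm v y] using add_add_one_rpow_neg_le c₂ hv hy
  calc (y + 1) ^ (-a) * (v + 1) ^ (-b) * (y + v + 1) ^ (-(c₁ + c₂))
      = (y + 1) ^ (-a) * (v + 1) ^ (-b) * ((y + v + 1) ^ (-c₁) * (y + v + 1) ^ (-c₂)) := by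
        rw [neg_add, rpow_add (by linarith)]
    _ ≤ (y + 1) ^ (-a) * (v + 1) ^ (-b) *
          ((y + 1) ^ (-c₁) * (v + 1) ^ (-min c₁ 0) * ((v + 1) ^ (-c₂) * (y + 1) ^ (-min c₂ 0))) := by
        gcongr
    _ = (y + 1) ^ (-(a + c₁ + min c₂ 0)) * (v + 1) ^ (-(b + c₂ + min c₁ 0)) := by
        simp only [neg_add, rpow_add hy₁, rpow_add hv₁]
        ring

/-- If `a+c > 1`, `b+c > 1` and `a+b+c > 2`, then
`φ(y,v) = (|y|+1)^{-a} (|v|+1)^{-b} (|y+v|+1)^{-c}` is integrable over the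
first quadrant; the condition `a+b > 1` may be dropped there. -/
theorem phi_integrableOn_quadrant (a b c : ℝ)
    (hac : 1 < a + c) (hbc : 1 < b + c) (habc : 2 < a + b + c) :
    MeasureTheory.IntegrableOn
      (fun p : ℝ × ℝ =>
        (|p.1| + 1) ^ (-a) * (|p.2| + 1) ^ (-b) * (|p.1 + p.2| + 1) ^ (-c))
      (Set.Ioi (0 : ℝ) ×ˢ Set.Ioi (0 : ℝ)) := by
  obtain ⟨c₁, c₂, rfl, hc₁, hc₂⟩ : ∃ c₁ c₂ : ℝ, c₁ + c₂ = c ∧ 1 - a < c₁ ∧ 1 - b < c₂ :=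
    ⟨(c - a + b) / 2, (c - b + a) / 2, by ring, by linarith, by linarith⟩
  have hp : -(a + c₁ + min c₂ 0) < -1 := by
    have := lt_min (show 1 - a - c₁ < c₂ by linarith) (show 1 - a - c₁ < 0 by linarith)
    linarith
  have hq : -(b + c₂ + min c₁ 0) < -1 := by
    have := lt_min (show 1 - b - c₂ < c₁ by linarith) (show 1 - b - c₂ < 0 by linarith)
    linarith
  have hdom := (integrableOn_add_rpow_Ioi_of_lt hp (neg_lt_zero.2 one_pos)).mul_prod
    (integrableOn_add_rpow_Ioi_of_lt hq (neg_lt_zero.2 one_pos))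
  refine hdom.mono' (by fun_prop) ?_
  filter_upwards [ae_restrict_mem (measurableSet_Ioi.prod measurableSet_Ioi)]
    with ⟨y, v⟩ ⟨hy, hv⟩
  rw [mem_Ioi] at hy hv
  rw [norm_of_nonneg (by positivity), abs_of_pos hy, abs_of_pos hv, abs_of_pos (add_pos hy hv)]
  exact rpow_neg_mul_rpow_neg_mul_rpow_neg_le hy.le hv.le
end

section
/- For fixed \sigma with 1/2 < \sigma < 1, the double sum over zeros of zeta in (7.2) tends to zero: \sum_{0 < \gamma'' < R, \gamma > R} (\gamma \gamma'')^{1/2 - \sigma} (\gamma - \gamma'' + 1)^{2\sigma - 7/2} \to 0 as R \to \infty, where \gamma, \gamma'' run over the positive imaginary parts of nontrivial zeros of the Riemann zeta function. -/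
open Filter

/-- The set of nontrivial zeros of `ζ` in the upper half-plane. -/
def upperZetaZeros : Set ℂ :=
  {z : ℂ | riemannZeta z = 0 ∧ 0 < z.re ∧ z.re < 1 ∧ 0 < z.im}

open Set Topology
open scoped ENNReal

/-!
Write `N = ⌈R⌉₊`, `n = ⌈γ⌉₊`, `m = ⌈γ''⌉₊`, so that `m ≤ N ≤ n`. As `γ - γ'' + 1 ≫ n - m + 1`,
and `n - m + 1` dominates both `n - N + 1` and `N - m + 1`, the summand is
`≪ R^{1/2-σ} (N + 1)^q w(n) w(m)` with `w(k) = (|k - N| + 1)^{-s}`, `s = 1 + 2ε` and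
`q = max 0 (2s - (7/2 - 2σ))`; the factor `γ''^{1/2-σ}` is bounded because the ordinates are
bounded below. Hence the double sum is `≪ R^{1/2-σ} (N + 1)^q (∑_ρ w(⌈γ⌉₊))²`. The counting
hypothesis puts `≪ (k + 1)^ε` ordinates in each window `(k - 1, k]`, and
`k + 1 ≤ (N + 1)(|k - N| + 1)`, so `∑_ρ w(⌈γ⌉₊) ≪ (N + 1)^ε ∑_{j ∈ ℤ} (|j| + 1)^{-1-ε}`.
The resulting bound `R^{1/2-σ+q+2ε}` tends to `0` once `ε` is small.
-/

lemma ENNReal.tsum_comp_eq_tsum_encard_mul {α β : Type*} (f : α → β) (g : β → ℝ≥0∞) :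
    ∑' a, g (f a) = ∑' b, (f ⁻¹' {b}).encard * g b := by
  rw [← ENNReal.tsum_fiberwise _ f]
  refine tsum_congr fun b => ?_
  rw [← ENNReal.tsum_set_const]
  exact tsum_congr fun a => by rw [a.2]

lemma ENNReal.tsum_tsum_le_tsum_mul_tsum {α β : Type*} {f : α → β → ℝ≥0∞} {u : α → ℝ≥0∞}
    {v : β → ℝ≥0∞} (h : ∀ a b, f a b ≤ u a * v b) :
    ∑' a, ∑' b, f a b ≤ (∑' a, u a) * ∑' b, v b :=
  calc ∑' a, ∑' b, f a b ≤ ∑' a, ∑' b, u a * v b :=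
        ENNReal.tsum_le_tsum fun a => ENNReal.tsum_le_tsum (h a)
    _ = (∑' a, u a) * ∑' b, v b := by simp_rw [ENNReal.tsum_mul_left, ENNReal.tsum_mul_right]

lemma tsum_tsum_le_of_tsum_tsum_ofReal_le {α β : Type*} {f : α → β → ℝ} (hf : ∀ a b, 0 ≤ f a b)
    {B : ℝ} (hB : 0 ≤ B) (h : ∑' a, ∑' b, ENNReal.ofReal (f a b) ≤ ENNReal.ofReal B) :
    ∑' a, ∑' b, f a b ≤ B := by
  have hinner (a : α) : ∑' b, ENNReal.ofReal (f a b) ≠ ∞ :=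
    ne_top_of_le_ne_top ENNReal.ofReal_ne_top ((ENNReal.le_tsum a).trans h)
  calc ∑' a, ∑' b, f a b = (∑' a, ∑' b, ENNReal.ofReal (f a b)).toReal := by
        rw [ENNReal.tsum_toReal_eq hinner]
        refine tsum_congr fun a => ?_
        rw [ENNReal.tsum_toReal_eq fun _ => ENNReal.ofReal_ne_top]
        exact tsum_congr fun b => (ENNReal.toReal_ofReal (hf a b)).symm
    _ ≤ B := ENNReal.toReal_le_of_le_ofReal hB h

lemma summable_abs_int_add_one_rpow_neg {s : ℝ} (hs : 1 < s) :
    Summable fun k : ℤ => (|(k : ℝ)| + 1) ^ (-s) := by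
  have h : Summable fun n : ℕ => ((n : ℝ) + 1) ^ (-s) := by
    simpa using (summable_nat_add_iff 1).mpr (Real.summable_nat_rpow.mpr (neg_lt_neg hs))
  refine .of_nat_of_neg ?_ ?_ <;> simpa using h

lemma add_one_le_mul_abs_sub_add_one {x y : ℝ} (hy : 0 ≤ y) :
    x + 1 ≤ (y + 1) * (|x - y| + 1) := by
  nlinarith [abs_nonneg (x - y), le_abs_self (x - y)]

lemma tsum_mul_rpow_abs_sub_le {c : ℕ → ℝ≥0∞} {K ε s : ℝ} (hK : 0 ≤ K) (hε : 0 ≤ ε)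
    (hs : 1 < s - ε) (hc : ∀ n, c n ≤ ENNReal.ofReal (K * ((n : ℝ) + 1) ^ ε)) (N : ℕ) :
    ∑' n, c n * ENNReal.ofReal ((|(n : ℝ) - N| + 1) ^ (-s)) ≤
      ENNReal.ofReal (K * ((N : ℝ) + 1) ^ ε * ∑' k : ℤ, (|(k : ℝ)| + 1) ^ (-(s - ε))) := by
  have hterm (n : ℕ) : c n * ENNReal.ofReal ((|(n : ℝ) - N| + 1) ^ (-s)) ≤
      ENNReal.ofReal (K * ((N : ℝ) + 1) ^ ε) *
        ENNReal.ofReal ((|(((n : ℤ) - N : ℤ) : ℝ)| + 1) ^ (-(s - ε))) := by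
    have hd : 0 < |(n : ℝ) - N| + 1 := by positivity
    have hgrowth : ((n : ℝ) + 1) ^ ε ≤ ((N : ℝ) + 1) ^ ε * (|(n : ℝ) - N| + 1) ^ ε := by
      rw [← Real.mul_rpow (by positivity) hd.le]
      exact Real.rpow_le_rpow (by positivity) (add_one_le_mul_abs_sub_add_one (by positivity)) hε
    calc c n * ENNReal.ofReal ((|(n : ℝ) - N| + 1) ^ (-s))
        ≤ ENNReal.ofReal (K * ((n : ℝ) + 1) ^ ε * (|(n : ℝ) - N| + 1) ^ (-s)) := by
          rw [ENNReal.ofReal_mul (by positivity)]; gcongr; exact hc n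
      _ ≤ ENNReal.ofReal (K * ((N : ℝ) + 1) ^ ε * (|(n : ℝ) - N| + 1) ^ (-(s - ε))) := by
          refine ENNReal.ofReal_le_ofReal ?_
          calc K * ((n : ℝ) + 1) ^ ε * (|(n : ℝ) - N| + 1) ^ (-s)
              ≤ K * (((N : ℝ) + 1) ^ ε * (|(n : ℝ) - N| + 1) ^ ε) * (|(n : ℝ) - N| + 1) ^ (-s) := by
                gcongr
            _ = K * ((N : ℝ) + 1) ^ ε * (|(n : ℝ) - N| + 1) ^ (-(s - ε)) := by
                rw [show -(s - ε) = ε + -s by ring, Real.rpow_add hd]; ring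
      _ = _ := by push_cast; rw [ENNReal.ofReal_mul (by positivity)]
  have hsum := summable_abs_int_add_one_rpow_neg hs
  calc _ ≤ ∑' n : ℕ, ENNReal.ofReal (K * ((N : ℝ) + 1) ^ ε) *
        ENNReal.ofReal ((|(((n : ℤ) - N : ℤ) : ℝ)| + 1) ^ (-(s - ε))) := ENNReal.tsum_le_tsum hterm
    _ ≤ ENNReal.ofReal (K * ((N : ℝ) + 1) ^ ε) *
        ∑' k : ℤ, ENNReal.ofReal ((|(k : ℝ)| + 1) ^ (-(s - ε))) := by
      rw [ENNReal.tsum_mul_left]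
      gcongr
      exact ENNReal.tsum_comp_le_tsum_of_injective (fun a b h => by simpa using h) _
    _ = _ := by
      rw [← ENNReal.ofReal_tsum_of_nonneg (fun _ => by positivity) hsum,
        ← ENNReal.ofReal_mul (by positivity)]

lemma rpow_sub_add_one_le_two_rpow_mul_ceil {x y p : ℝ} (hy : 0 ≤ y) (hyx : y ≤ x) (hp : 0 ≤ p) :
    (x - y + 1) ^ (-p) ≤ 2 ^ p * ((⌈x⌉₊ : ℝ) - ⌈y⌉₊ + 1) ^ (-p) := by
  have hx : (⌈x⌉₊ : ℝ) < x + 1 := Nat.ceil_lt_add_one (hy.trans hyx)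
  have hy' : y ≤ ⌈y⌉₊ := Nat.le_ceil y
  have hmono : (⌈y⌉₊ : ℝ) ≤ ⌈x⌉₊ := by exact_mod_cast Nat.ceil_mono hyx
  have hpos : 0 < (⌈x⌉₊ : ℝ) - ⌈y⌉₊ + 1 := by linarith
  calc (x - y + 1) ^ (-p) ≤ (((⌈x⌉₊ : ℝ) - ⌈y⌉₊ + 1) / 2) ^ (-p) :=
        Real.rpow_le_rpow_of_nonpos (by positivity) (by linarith) (neg_nonpos.mpr hp)
    _ = 2 ^ p * ((⌈x⌉₊ : ℝ) - ⌈y⌉₊ + 1) ^ (-p) := by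
        rw [Real.div_rpow hpos.le zero_le_two, Real.rpow_neg zero_le_two, div_inv_eq_mul, mul_comm]

lemma rpow_sub_add_one_le_mul {a b c p s q : ℝ} (hb : 0 ≤ b) (hbc : b ≤ c) (hca : c ≤ a)
    (hs : 0 ≤ s) (hsp : s ≤ p) (hq : 0 ≤ q) (hsq : 2 * s - p ≤ q) :
    (a - b + 1) ^ (-p) ≤ (c + 1) ^ q * (a - c + 1) ^ (-s) * (c - b + 1) ^ (-s) := by
  have hu : 0 < a - b + 1 := by linarith
  have hv : 0 < a - c + 1 := by linarith
  have hw : 1 ≤ c - b + 1 := by linarith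
  have hw' : 0 < c - b + 1 := by linarith
  have hgap : (c - b + 1) ^ (2 * s - p) ≤ (c + 1) ^ q :=
    calc (c - b + 1) ^ (2 * s - p) ≤ (c - b + 1) ^ q := Real.rpow_le_rpow_of_exponent_le hw hsq
      _ ≤ (c + 1) ^ q := Real.rpow_le_rpow hw'.le (by linarith) hq
  calc (a - b + 1) ^ (-p) = (a - b + 1) ^ (-s) * (a - b + 1) ^ (-(p - s)) := by
        rw [← Real.rpow_add hu]; ring_nf
    _ ≤ (a - c + 1) ^ (-s) * (c - b + 1) ^ (-(p - s)) := by
        have hab : a - c + 1 ≤ a - b + 1 := by linarith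
        have hcb : c - b + 1 ≤ a - b + 1 := by linarith
        exact mul_le_mul (Real.rpow_le_rpow_of_nonpos hv hab (by linarith))
          (Real.rpow_le_rpow_of_nonpos hw' hcb (by linarith)) (by positivity) (by positivity)
    _ = (a - c + 1) ^ (-s) * ((c - b + 1) ^ (2 * s - p) * (c - b + 1) ^ (-s)) := by
        rw [← Real.rpow_add hw']; ring_nf
    _ ≤ (a - c + 1) ^ (-s) * ((c + 1) ^ q * (c - b + 1) ^ (-s)) := by gcongr
    _ = _ := by ring

lemma tendsto_rpow_mul_ceil_add_one_rpow {e τ : ℝ} (hτ : 0 ≤ τ) (h : e + τ < 0) :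
    Tendsto (fun R : ℝ => R ^ e * ((⌈R⌉₊ : ℝ) + 1) ^ τ) atTop (𝓝 0) := by
  have hlim : Tendsto (fun R : ℝ => 3 ^ τ * R ^ (e + τ)) atTop (𝓝 0) := by
    simpa using (tendsto_rpow_neg_atTop (neg_pos.mpr h)).const_mul (3 ^ τ)
  refine squeeze_zero' (eventually_ge_atTop 0 |>.mono fun R hR => by positivity)
    (eventually_ge_atTop 1 |>.mono fun R hR => ?_) hlim
  have hR0 : 0 < R := by linarith
  have hceil : (⌈R⌉₊ : ℝ) + 1 ≤ 3 * R := by linarith [Nat.ceil_lt_add_one hR0.le]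
  calc R ^ e * ((⌈R⌉₊ : ℝ) + 1) ^ τ ≤ R ^ e * (3 * R) ^ τ := by gcongr
    _ = 3 ^ τ * R ^ (e + τ) := by
        rw [Real.mul_rpow (by norm_num) hR0.le, Real.rpow_add hR0]; ring

noncomputable def pairTerm (σ R x y : ℝ) : ℝ :=
  if R < x ∧ y < R then (x * y) ^ (1 / 2 - σ) * (x - y + 1) ^ (2 * σ - 7 / 2) else 0

lemma pairTerm_nonneg (σ R : ℝ) {x y : ℝ} (hy : 0 ≤ y) : 0 ≤ pairTerm σ R x y := by
  unfold pairTerm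
  split_ifs with h
  · have hx : 0 ≤ x := by linarith [h.1, h.2]
    exact mul_nonneg (Real.rpow_nonneg (mul_nonneg hx hy) _) (Real.rpow_nonneg (by linarith) _)
  · exact le_rfl

lemma pairTerm_le {σ s q t₀ R x y : ℝ} (hσ : 1 / 2 ≤ σ) (hs : 0 ≤ s) (hsp : s ≤ 7 / 2 - 2 * σ)
    (hq : 0 ≤ q) (hsq : 2 * s - (7 / 2 - 2 * σ) ≤ q) (ht₀ : 0 < t₀) (hy : t₀ ≤ y) (hR : 0 ≤ R) :
    pairTerm σ R x y ≤ t₀ ^ (1 / 2 - σ) * 2 ^ (7 / 2 - 2 * σ) * R ^ (1 / 2 - σ) *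
      ((⌈R⌉₊ : ℝ) + 1) ^ q *
        ((|(⌈x⌉₊ : ℝ) - ⌈R⌉₊| + 1) ^ (-s) * (|(⌈y⌉₊ : ℝ) - ⌈R⌉₊| + 1) ^ (-s)) := by
  unfold pairTerm
  split_ifs with h
  swap
  · positivity
  obtain ⟨hRx, hyR⟩ := h
  have hy0 : 0 < y := ht₀.trans_le hy
  have hR0 : 0 < R := hy0.trans hyR
  have hNx : (⌈R⌉₊ : ℝ) ≤ ⌈x⌉₊ := by exact_mod_cast Nat.ceil_mono hRx.le
  have hyN : (⌈y⌉₊ : ℝ) ≤ ⌈R⌉₊ := by exact_mod_cast Nat.ceil_mono hyR.le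
  have hprod : (x * y) ^ (1 / 2 - σ) ≤ R ^ (1 / 2 - σ) * t₀ ^ (1 / 2 - σ) := by
    rw [Real.mul_rpow (by linarith) hy0.le]
    exact mul_le_mul (Real.rpow_le_rpow_of_nonpos hR0 hRx.le (by linarith))
      (Real.rpow_le_rpow_of_nonpos ht₀ hy (by linarith)) (by positivity) (by positivity)
  have hgap : (x - y + 1) ^ (2 * σ - 7 / 2) ≤ 2 ^ (7 / 2 - 2 * σ) * (((⌈R⌉₊ : ℝ) + 1) ^ q *
      (|(⌈x⌉₊ : ℝ) - ⌈R⌉₊| + 1) ^ (-s) * (|(⌈y⌉₊ : ℝ) - ⌈R⌉₊| + 1) ^ (-s)) := by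
    rw [show 2 * σ - 7 / 2 = -(7 / 2 - 2 * σ) by ring, abs_of_nonneg (sub_nonneg.mpr hNx),
      abs_of_nonpos (sub_nonpos.mpr hyN), neg_sub (⌈y⌉₊ : ℝ)]
    calc (x - y + 1) ^ (-(7 / 2 - 2 * σ))
        ≤ 2 ^ (7 / 2 - 2 * σ) * ((⌈x⌉₊ : ℝ) - ⌈y⌉₊ + 1) ^ (-(7 / 2 - 2 * σ)) :=
          rpow_sub_add_one_le_two_rpow_mul_ceil hy0.le (by linarith) (by linarith)
      _ ≤ _ := by
          gcongr
          exact rpow_sub_add_one_le_mul (Nat.cast_nonneg _) hyN hNx hs hsp hq hsq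
  calc (x * y) ^ (1 / 2 - σ) * (x - y + 1) ^ (2 * σ - 7 / 2)
      ≤ (R ^ (1 / 2 - σ) * t₀ ^ (1 / 2 - σ)) * (2 ^ (7 / 2 - 2 * σ) * (((⌈R⌉₊ : ℝ) + 1) ^ q *
        (|(⌈x⌉₊ : ℝ) - ⌈R⌉₊| + 1) ^ (-s) * (|(⌈y⌉₊ : ℝ) - ⌈R⌉₊| + 1) ^ (-s))) :=
        mul_le_mul hprod hgap (Real.rpow_nonneg (by linarith) _) (by positivity)
    _ = _ := by ring

theorem tsum_tsum_pairTerm_le {α : Type*} (γ : α → ℝ) {σ ε s q K t₀ R : ℝ} (hσ : 1 / 2 ≤ σ)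
    (hε : 0 ≤ ε) (hs : 1 < s - ε) (hsp : s ≤ 7 / 2 - 2 * σ) (hq : 0 ≤ q)
    (hsq : 2 * s - (7 / 2 - 2 * σ) ≤ q) (hK : 0 ≤ K) (ht₀ : 0 < t₀) (hγ : ∀ a, t₀ ≤ γ a)
    (hcount : ∀ n : ℕ, (((fun a => ⌈γ a⌉₊) ⁻¹' {n}).encard : ℝ≥0∞) ≤
      ENNReal.ofReal (K * ((n : ℝ) + 1) ^ ε))
    (hR : 0 ≤ R) :
    ∑' a, ∑' b, pairTerm σ R (γ a) (γ b) ≤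
      t₀ ^ (1 / 2 - σ) * 2 ^ (7 / 2 - 2 * σ) * (K * ∑' k : ℤ, (|(k : ℝ)| + 1) ^ (-(s - ε))) ^ 2 *
        (R ^ (1 / 2 - σ) * ((⌈R⌉₊ : ℝ) + 1) ^ (q + 2 * ε)) := by
  set N := ⌈R⌉₊
  set Z := ∑' k : ℤ, (|(k : ℝ)| + 1) ^ (-(s - ε))
  let B := t₀ ^ (1 / 2 - σ) * 2 ^ (7 / 2 - 2 * σ) * R ^ (1 / 2 - σ) * ((N : ℝ) + 1) ^ q
  have hZ : 0 ≤ Z := tsum_nonneg fun _ => by positivity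
  have hsingle : ∑' a, ENNReal.ofReal ((|(⌈γ a⌉₊ : ℝ) - N| + 1) ^ (-s)) ≤
      ENNReal.ofReal (K * ((N : ℝ) + 1) ^ ε * Z) := by
    rw [ENNReal.tsum_comp_eq_tsum_encard_mul (fun a => ⌈γ a⌉₊)
      (fun n => ENNReal.ofReal ((|(n : ℝ) - N| + 1) ^ (-s)))]
    exact tsum_mul_rpow_abs_sub_le hK hε hs hcount N
  have hpair (a b : α) : ENNReal.ofReal (pairTerm σ R (γ a) (γ b)) ≤
      ENNReal.ofReal B * ENNReal.ofReal ((|(⌈γ a⌉₊ : ℝ) - N| + 1) ^ (-s)) *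
        ENNReal.ofReal ((|(⌈γ b⌉₊ : ℝ) - N| + 1) ^ (-s)) := by
    rw [← ENNReal.ofReal_mul (by positivity), ← ENNReal.ofReal_mul (by positivity), mul_assoc]
    exact ENNReal.ofReal_le_ofReal
      (pairTerm_le hσ (by linarith) hsp hq hsq ht₀ (hγ b) hR)
  refine tsum_tsum_le_of_tsum_tsum_ofReal_le
    (fun a b => pairTerm_nonneg σ R (ht₀.le.trans (hγ b))) (by positivity) ?_
  calc ∑' a, ∑' b, ENNReal.ofReal (pairTerm σ R (γ a) (γ b))
      ≤ ENNReal.ofReal B * ENNReal.ofReal (K * ((N : ℝ) + 1) ^ ε * Z) *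
          ENNReal.ofReal (K * ((N : ℝ) + 1) ^ ε * Z) := by
        refine (ENNReal.tsum_tsum_le_tsum_mul_tsum hpair).trans ?_
        rw [ENNReal.tsum_mul_left]
        gcongr
    _ = ENNReal.ofReal (B * (K * ((N : ℝ) + 1) ^ ε * Z) ^ 2) := by
        rw [← ENNReal.ofReal_mul (by positivity), ← ENNReal.ofReal_mul (by positivity), sq,
          mul_assoc]
    _ = _ := by
        have hN : (0 : ℝ) < N + 1 := by positivity
        rw [Real.rpow_add hN, show 2 * ε = ε + ε by ring, Real.rpow_add hN]
        simp only [B]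
        ring_nf

lemma upperZetaZeros_finite_im_le (T : ℝ) :
    {z : ℂ | z ∈ upperZetaZeros ∧ z.im ≤ T}.Finite :=
  ((isCompact_Icc.reProdIm (isCompact_Icc (a := 0) (b := T))).inter_riemannZetaZeros_finite).subset
    fun _ ⟨⟨hζ, hre, hre', him⟩, hT⟩ => ⟨⟨⟨hre.le, hre'.le⟩, him.le, hT⟩, hζ⟩

lemma exists_pos_le_im_upperZetaZeros : ∃ t₀ > 0, ∀ z ∈ upperZetaZeros, t₀ ≤ z.im := by
  set S := (upperZetaZeros_finite_im_le 1).toFinset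
  refine ⟨(insert 1 (S.image Complex.im)).min' (Finset.insert_nonempty _ _), ?_, fun z hz => ?_⟩
  · simp only [Finset.lt_min'_iff, Finset.forall_mem_insert, Finset.forall_mem_image]
    exact ⟨one_pos, fun z hz => ((upperZetaZeros_finite_im_le 1).mem_toFinset.1 hz).1.2.2.2⟩
  · rcases le_or_gt z.im 1 with h | h
    · exact Finset.min'_le _ _ (Finset.mem_insert_of_mem (Finset.mem_image_of_mem _
        ((upperZetaZeros_finite_im_le 1).mem_toFinset.2 ⟨hz, h⟩)))
    · exact (Finset.min'_le _ _ (Finset.mem_insert_self _ _)).trans h.le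

lemma exists_card_window_le_rpow {A : ℝ}
    (hA : ∀ T : ℝ, 2 ≤ T →
      (Nat.card {z : ℂ | z ∈ upperZetaZeros ∧ T < z.im ∧ z.im ≤ T + 1} : ℝ) ≤ A * Real.log T)
    {ε : ℝ} (hε : 0 < ε) :
    ∃ K, 0 ≤ K ∧ ∀ n : ℕ, (Nat.card {z : ℂ | z ∈ upperZetaZeros ∧ (n : ℝ) - 1 < z.im ∧
      z.im ≤ (n : ℝ) - 1 + 1} : ℝ) ≤ K * ((n : ℝ) + 1) ^ ε := by
  set M : ℝ := (Nat.card {z : ℂ | z ∈ upperZetaZeros ∧ z.im ≤ 2} : ℝ)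
  refine ⟨|A| / ε + M, by positivity, fun n => ?_⟩
  have hone : 1 ≤ ((n : ℝ) + 1) ^ ε := Real.one_le_rpow (by simp) hε.le
  rcases le_or_gt 3 n with hn | hn
  · have hn : (3 : ℝ) ≤ n := by exact_mod_cast hn
    calc _ ≤ A * Real.log ((n : ℝ) - 1) := hA _ (by linarith)
      _ ≤ |A| * (((n : ℝ) - 1) ^ ε / ε) := by
          have hlog : 0 ≤ Real.log ((n : ℝ) - 1) := Real.log_nonneg (by linarith)
          exact mul_le_mul (le_abs_self A) (Real.log_le_rpow_div (by linarith) hε) hlog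
            (abs_nonneg A)
      _ ≤ |A| / ε * ((n : ℝ) + 1) ^ ε := by
          rw [mul_div_assoc', div_mul_eq_mul_div]
          gcongr <;> linarith
      _ ≤ _ := by gcongr; exact le_add_of_nonneg_right (by positivity)
  · have hsub : {z : ℂ | z ∈ upperZetaZeros ∧ (n : ℝ) - 1 < z.im ∧ z.im ≤ (n : ℝ) - 1 + 1} ⊆
        {z : ℂ | z ∈ upperZetaZeros ∧ z.im ≤ 2} := by
      have : (n : ℝ) ≤ 2 := by exact_mod_cast Nat.le_of_lt_succ hn
      exact fun z ⟨hz, _, h⟩ => ⟨hz, by linarith⟩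
    calc _ ≤ M := Nat.cast_le.mpr (Nat.card_mono (upperZetaZeros_finite_im_le 2) hsub)
      _ ≤ M * ((n : ℝ) + 1) ^ ε := le_mul_of_one_le_right (by positivity) hone
      _ ≤ _ := by gcongr; exact le_add_of_nonneg_left (by positivity)

lemma encard_preimage_ceil_im_le (n : ℕ) :
    ((fun ρ : upperZetaZeros => ⌈(ρ : ℂ).im⌉₊) ⁻¹' {n}).encard ≤
      Nat.card {z : ℂ | z ∈ upperZetaZeros ∧ (n : ℝ) - 1 < z.im ∧ z.im ≤ (n : ℝ) - 1 + 1} := by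
  have hfin : {z : ℂ | z ∈ upperZetaZeros ∧ (n : ℝ) - 1 < z.im ∧ z.im ≤ (n : ℝ) - 1 + 1}.Finite :=
    (upperZetaZeros_finite_im_le n).subset fun z hz => ⟨hz.1, by linarith [hz.2.2]⟩
  rw [← Subtype.val_injective.encard_image, Nat.card_coe_set_eq, hfin.cast_ncard_eq]
  refine encard_le_encard ?_
  rintro _ ⟨ρ, hρ, rfl⟩
  have him : 0 ≤ (ρ : ℂ).im := ρ.2.2.2.2.le
  have hceil := Nat.ceil_lt_add_one him
  simp only [mem_preimage, mem_singleton_iff] at hρ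
  refine ⟨ρ.2, ?_, ?_⟩
  · rw [hρ] at hceil; linarith
  · have := Nat.le_ceil (ρ : ℂ).im; rw [hρ] at this; linarith

lemma exists_encard_ceil_im_le {A : ℝ}
    (hA : ∀ T : ℝ, 2 ≤ T →
      (Nat.card {z : ℂ | z ∈ upperZetaZeros ∧ T < z.im ∧ z.im ≤ T + 1} : ℝ) ≤ A * Real.log T)
    {ε : ℝ} (hε : 0 < ε) :
    ∃ K, 0 ≤ K ∧ ∀ n : ℕ, (((fun ρ : upperZetaZeros => ⌈(ρ : ℂ).im⌉₊) ⁻¹' {n}).encard : ℝ≥0∞) ≤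
      ENNReal.ofReal (K * ((n : ℝ) + 1) ^ ε) := by
  obtain ⟨K, hK, hwindow⟩ := exists_card_window_le_rpow hA hε
  refine ⟨K, hK, fun n => ?_⟩
  calc (((fun ρ : upperZetaZeros => ⌈(ρ : ℂ).im⌉₊) ⁻¹' {n}).encard : ℝ≥0∞)
      ≤ ENNReal.ofReal (Nat.card {z : ℂ | z ∈ upperZetaZeros ∧ (n : ℝ) - 1 < z.im ∧
          z.im ≤ (n : ℝ) - 1 + 1}) := by
        rw [ENNReal.ofReal_natCast]
        exact_mod_cast encard_preimage_ceil_im_le n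
    _ ≤ _ := ENNReal.ofReal_le_ofReal (hwindow n)

/-- Assuming the standard zero-counting bound (`O(log T)` zeros with imaginary
part in `(T, T+1]`), for fixed `1/2 < σ < 1` the double sum
`∑_{0 < γ'' < R, γ > R} (γ γ'')^{1/2-σ} (γ - γ'' + 1)^{2σ-7/2}` over imaginary
parts of zeta's zeros tends to `0` as `R → ∞`. -/
theorem zero_double_sum_tendsto_zero (σ : ℝ) (hσ : 1 / 2 < σ) (hσ' : σ < 1)
    (hcount : ∃ A : ℝ, ∀ T : ℝ, 2 ≤ T →
      (Nat.card {z : ℂ | z ∈ upperZetaZeros ∧ T < z.im ∧ z.im ≤ T + 1} : ℝ)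
        ≤ A * Real.log T) :
    Tendsto
      (fun R : ℝ =>
        ∑' ρ : upperZetaZeros, ∑' ρ' : upperZetaZeros,
          if R < (ρ : ℂ).im ∧ (ρ' : ℂ).im < R then
            ((ρ : ℂ).im * (ρ' : ℂ).im) ^ (1 / 2 - σ) *
              ((ρ : ℂ).im - (ρ' : ℂ).im + 1) ^ (2 * σ - 7 / 2)
          else 0)
      atTop (nhds 0) := by
  show Tendsto (fun R => ∑' ρ : upperZetaZeros, ∑' ρ' : upperZetaZeros,
    pairTerm σ R (ρ : ℂ).im (ρ' : ℂ).im) atTop (𝓝 0)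
  obtain ⟨A, hA⟩ := hcount
  obtain ⟨ε, hε, hεσ, hεσ'⟩ : ∃ ε : ℝ, 0 < ε ∧ 4 * ε ≤ σ - 1 / 2 ∧ 8 * ε ≤ 1 - σ :=
    ⟨min (σ - 1 / 2) (1 - σ) / 8, div_pos (lt_min (by linarith) (by linarith)) (by norm_num),
      by linarith [min_le_left (σ - 1 / 2) (1 - σ)], by linarith [min_le_right (σ - 1 / 2) (1 - σ)]⟩
  set q := max 0 (2 * (1 + 2 * ε) - (7 / 2 - 2 * σ))
  have hexp : 1 / 2 - σ + (q + 2 * ε) < 0 := by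
    rcases max_cases 0 (2 * (1 + 2 * ε) - (7 / 2 - 2 * σ)) with ⟨h, -⟩ | ⟨h, -⟩ <;> linarith
  obtain ⟨K, hK, hKcount⟩ := exists_encard_ceil_im_le hA hε
  obtain ⟨t₀, ht₀, ht₀le⟩ := exists_pos_le_im_upperZetaZeros
  refine squeeze_zero'
    (.of_forall fun R => tsum_nonneg fun ρ => tsum_nonneg fun ρ' =>
      pairTerm_nonneg σ R ρ'.2.2.2.2.le)
    ((eventually_ge_atTop 0).mono fun R hR =>
      tsum_tsum_pairTerm_le (fun ρ : upperZetaZeros => (ρ : ℂ).im) (s := 1 + 2 * ε) hσ.le hε.le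
        (by linarith) (by linarith) (le_max_left _ _) (le_max_right _ _) hK ht₀
        (fun ρ => ht₀le _ ρ.2) hKcount hR)
    (by simpa using (tendsto_rpow_mul_ceil_add_one_rpow (by positivity) hexp).const_mul _)
end
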